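/- Let (L, [·,…,·], ε, α, β) be a multiplicative n-BiHom-Lie color algebra. If D is an (αᵏ,βʳ)-derivation of degree d and φ an element of the (αˡ,βˢ)-centroid of degree f, then the ε-commutator [D,φ] = Dφ − ε(d,f)φD lies in the (α^{k+l},β^{r+s})-centroid of L. -/

import Mathlib

open Finset TensorProduct

/-- An `n`-BiHom-Lie color algebra (with `n = arity = N+1`, so the structure parameter `N`
equals `n-1`): a `Γ`-graded `K`-vector space `L` with an even `(N+1)`-linear bracket,
a skew-symmetric bicharacter `ε`, and two even commuting linear maps `α, β` satisfying the
`ε`-BiHom-skew-symmetry and the BiHom `ε`-Jacobi identity. -/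
structure NBLCA (K : Type*) [Field K] (Γ : Type*) [AddCommGroup Γ] [DecidableEq Γ] (N : ℕ)
    (L : Type*) [AddCommGroup L] [Module K L] : Type _ where
  grading : Γ → Submodule K L
  internal : DirectSum.IsInternal grading
  ε : Γ → Γ → K
  α : L →ₗ[K] L
  β : L →ₗ[K] L
  bracket : MultilinearMap K (fun _ : Fin (N + 1) => L) L
  eps_ne : ∀ a b, ε a b ≠ 0
  eps_skew : ∀ a b, ε a b * ε b a = 1
  eps_add_right : ∀ a b c, ε a (b + c) = ε a b * ε a c
  eps_add_left : ∀ a b c, ε (a + b) c = ε a c * ε b c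
  α_even : ∀ (γ : Γ) (x : L), x ∈ grading γ → α x ∈ grading γ
  β_even : ∀ (γ : Γ) (x : L), x ∈ grading γ → β x ∈ grading γ
  αβ_comm : ∀ x, α (β x) = β (α x)
  bracket_grade : ∀ (d : Fin (N + 1) → Γ) (x : Fin (N + 1) → L),
    (∀ i, x i ∈ grading (d i)) → bracket x ∈ grading (∑ i, d i)
  skew : ∀ (d : Fin (N + 1) → Γ) (x : Fin (N + 1) → L), (∀ i, x i ∈ grading (d i)) →
    ∀ k : Fin N,
      bracket (Fin.snoc (fun i : Fin N => β ((x ∘ Equiv.swap k.castSucc k.succ) i.castSucc))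
          (α ((x ∘ Equiv.swap k.castSucc k.succ) (Fin.last N))))
        = (-(ε (d k.castSucc) (d k.succ))) •
          bracket (Fin.snoc (fun i : Fin N => β (x i.castSucc)) (α (x (Fin.last N))))
  jacobi : ∀ (dx : Fin N → Γ) (x : Fin N → L) (dy : Fin (N + 1) → Γ) (y : Fin (N + 1) → L),
    (∀ i, x i ∈ grading (dx i)) → (∀ i, y i ∈ grading (dy i)) →
    bracket (Fin.snoc (fun i : Fin N => β (β (x i)))
        (bracket (Fin.snoc (fun i : Fin N => β (y i.castSucc)) (α (y (Fin.last N))))))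
      = ∑ k : Fin (N + 1), ε (∑ i, dx i) (∑ l ∈ Finset.Iio k, dy l) •
          bracket (Function.update (fun i => β (β (y i))) k
            (bracket (Fin.snoc (fun i : Fin N => β (x i)) (α (y k)))))

theorem Function.update_comp_update_same {ι M : Type*} [DecidableEq ι] (F : M → M) (g : ι → M)
    (i : ι) (a v : M) :
    update (fun m => F (update g i a m)) i v = update (fun m => F (g m)) i v := by
  ext m
  rcases eq_or_ne m i with rfl | hmi <;> simp [*]

namespace NBLCA

variable {K : Type*} [Field K] {Γ : Type*} [AddCommGroup Γ] [DecidableEq Γ] {N : ℕ}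
  {L : Type*} [AddCommGroup L] [Module K L]

/-- `α` and `β` are morphisms for the bracket. -/
def IsMultiplicative (A : NBLCA K Γ N L) : Prop :=
  (∀ x, A.α (A.bracket x) = A.bracket fun i => A.α (x i)) ∧
  (∀ x, A.β (A.bracket x) = A.bracket fun i => A.β (x i))

/-- A linear map homogeneous of degree `d`. -/
def HasDegree (A : NBLCA K Γ N L) (d : Γ) (D : L →ₗ[K] L) : Prop :=
  ∀ (γ : Γ) (x : L), x ∈ A.grading γ → D x ∈ A.grading (γ + d)

/-- A linear map commuting with the twisting maps `α` and `β`. -/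
def CommutesTw (A : NBLCA K Γ N L) (D : L →ₗ[K] L) : Prop :=
  (∀ x, D (A.α x) = A.α (D x)) ∧ (∀ x, D (A.β x) = A.β (D x))

/-- The twisting map `βʳ ∘ αᵏ`. -/
def tw (A : NBLCA K Γ N L) (k r : ℕ) : L →ₗ[K] L := (A.β ^ r) ∘ₗ (A.α ^ k)

/-- `(αᵏ, βʳ)`-derivation of degree `d`. -/
def IsDer (A : NBLCA K Γ N L) (k r : ℕ) (d : Γ) (D : L →ₗ[K] L) : Prop :=
  A.HasDegree d D ∧ A.CommutesTw D ∧
  ∀ (dx : Fin (N + 1) → Γ) (x : Fin (N + 1) → L), (∀ i, x i ∈ A.grading (dx i)) →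
    D (A.bracket x) = ∑ i : Fin (N + 1), A.ε d (∑ l ∈ Finset.Iio i, dx l) •
      A.bracket (Function.update (fun j => A.tw k r (x j)) i (D (x i)))

/-- `(αᵏ, βʳ)`-centroid elements of degree `d`. -/
def IsCent (A : NBLCA K Γ N L) (k r : ℕ) (d : Γ) (D : L →ₗ[K] L) : Prop :=
  A.HasDegree d D ∧ A.CommutesTw D ∧
  ∀ (i : Fin (N + 1)) (dx : Fin (N + 1) → Γ) (x : Fin (N + 1) → L),
    (∀ j, x j ∈ A.grading (dx j)) →
    D (A.bracket x) = A.ε d (∑ l ∈ Finset.Iio i, dx l) •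
      A.bracket (Function.update (fun j => A.tw k r (x j)) i (D (x i)))

/-- `(αᵏ, βʳ)`-quasicentroid elements of degree `d`. -/
def IsQC (A : NBLCA K Γ N L) (k r : ℕ) (d : Γ) (D : L →ₗ[K] L) : Prop :=
  A.HasDegree d D ∧ A.CommutesTw D ∧
  ∀ (i : Fin (N + 1)) (dx : Fin (N + 1) → Γ) (x : Fin (N + 1) → L),
    (∀ j, x j ∈ A.grading (dx j)) →
    A.bracket (Function.update (fun j => A.tw k r (x j)) 0 (D (x 0)))
      = A.ε d (∑ l ∈ Finset.Iio i, dx l) •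
        A.bracket (Function.update (fun j => A.tw k r (x j)) i (D (x i)))

/-- Central `(αᵏ, βʳ)`-derivation of degree `d`. -/
def IsZDer (A : NBLCA K Γ N L) (k r : ℕ) (d : Γ) (D : L →ₗ[K] L) : Prop :=
  A.HasDegree d D ∧ A.CommutesTw D ∧
  ∀ (dx : Fin (N + 1) → Γ) (x : Fin (N + 1) → L), (∀ i, x i ∈ A.grading (dx i)) →
    D (A.bracket x) = 0 ∧
    ∀ i : Fin (N + 1), A.ε d (∑ l ∈ Finset.Iio i, dx l) •
      A.bracket (Function.update (fun j => A.tw k r (x j)) i (D (x i))) = 0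

/-- BiHom-ideal of an `n`-BiHom-Lie color algebra. -/
def IsBiHomIdeal (A : NBLCA K Γ N L) (I : Submodule K L) : Prop :=
  (∀ x ∈ I, A.α x ∈ I) ∧ (∀ x ∈ I, A.β x ∈ I) ∧
  ∀ x : Fin (N + 1) → L, x 0 ∈ I → A.bracket x ∈ I

/-- The derived sequence `L₀ = L`, `Lₘ₊₁ = [Lₘ, …, Lₘ]`. -/
def derived (A : NBLCA K Γ N L) : ℕ → Submodule K L
  | 0 => ⊤
  | m + 1 => Submodule.span K
      {z | ∃ x : Fin (N + 1) → L, (∀ i, x i ∈ A.derived m) ∧ z = A.bracket x}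

end NBLCA

/-! Fix the slot `i` of the centroid identity. Applied to `[x₁, …, xₙ]`, both `Dφ` and `φD` expand,
by the centroid identity of `φ` at slot `i` and the Leibniz rule of `D`, into sums over the slot
`j` that `D` hits. For `j ≠ i` the two `j`-th terms bracket the same elements, because all the
twisting maps commute with each other and with `D` and `φ`; their signs differ exactly by
`ε(d, f)`, the sign of `D` passing `φ xᵢ` versus `φ` passing `D xⱼ`. Hence only the `j = i` terms
survive in `Dφ - ε(d, f) φD`, and they form the centroid identity of the commutator. -/

open Function

theorem Finset.sum_Iio_update_add {ι M : Type*} [LinearOrder ι] [LocallyFiniteOrderBot ι]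
    [DecidableEq ι] [AddCommMonoid M] (g : ι → M) (i j : ι) (a : M) :
    ∑ m ∈ Iio j, update g i (g i + a) m = ∑ m ∈ Iio j, g m + if i < j then a else 0 := by
  by_cases h : i < j
  · rw [sum_update_of_mem (mem_Iio.2 h), ← add_sum_erase _ g (mem_Iio.2 h), if_pos h,
      sdiff_singleton_eq_erase, add_right_comm]
  · rw [sum_update_of_notMem (by simpa using h), if_neg h, add_zero]

theorem Function.update_comp_update_comm {ι M : Type*} [DecidableEq ι] (F G : M → M)
    (hFG : ∀ v, F (G v) = G (F v)) (x : ι → M) {i j : ι} (hji : j ≠ i) (a b : M) :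
    update (fun m => F (update (fun m => G (x m)) i a m)) j (G b)
      = update (fun m => G (update (fun m => F (x m)) j b m)) i (F a) := by
  ext m
  rcases eq_or_ne m i with rfl | hmi
  · simp [hji.symm]
  rcases eq_or_ne m j with rfl | hmj
  · simp [hmi]
  · simp [hmi, hmj, hFG]

namespace NBLCA

variable {K : Type*} [Field K] {Γ : Type*} [AddCommGroup Γ] [DecidableEq Γ] {N : ℕ}
  {L : Type*} [AddCommGroup L] [Module K L] {A : NBLCA K Γ N L}

theorem commute_α_β (A : NBLCA K Γ N L) : Commute A.α A.β :=
  LinearMap.ext A.αβ_comm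

theorem commutesTw_iff {D : L →ₗ[K] L} : A.CommutesTw D ↔ Commute D A.α ∧ Commute D A.β := by
  simp only [CommutesTw, Commute, SemiconjBy, LinearMap.ext_iff, Module.End.mul_apply]

theorem tw_tw (A : NBLCA K Γ N L) (a b c e : ℕ) (x : L) :
    A.tw a b (A.tw c e x) = A.tw (a + c) (b + e) x := by
  have hαβ := LinearMap.congr_fun (A.commute_α_β.pow_pow a e).eq ((A.α ^ c) x)
  simp only [Module.End.mul_apply] at hαβ
  simp only [tw, LinearMap.comp_apply, pow_add, Module.End.mul_apply, hαβ]

theorem tw_mem (A : NBLCA K Γ N L) (a b : ℕ) {γ : Γ} {x : L} (hx : x ∈ A.grading γ) :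
    A.tw a b x ∈ A.grading γ :=
  Module.End.pow_apply_mem_of_forall_mem b (A.β_even γ) _
    (Module.End.pow_apply_mem_of_forall_mem a (A.α_even γ) x hx)

theorem commutesTw_tw (A : NBLCA K Γ N L) (a b : ℕ) : A.CommutesTw (A.tw a b) := by
  rw [commutesTw_iff, tw, ← Module.End.mul_eq_comp]
  exact ⟨(A.commute_α_β.symm.pow_left b).mul_left ((Commute.refl A.α).pow_left a),
    ((Commute.refl A.β).pow_left b).mul_left (A.commute_α_β.pow_left a)⟩

theorem CommutesTw.commute_tw {D : L →ₗ[K] L} (hD : A.CommutesTw D) (a b : ℕ) :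
    Commute D (A.tw a b) := by
  obtain ⟨hα, hβ⟩ := commutesTw_iff.1 hD
  rw [tw, ← Module.End.mul_eq_comp]
  exact (hβ.pow_right b).mul_right (hα.pow_right a)

theorem CommutesTw.map_tw {D : L →ₗ[K] L} (hD : A.CommutesTw D) (a b : ℕ) (x : L) :
    D (A.tw a b x) = A.tw a b (D x) :=
  LinearMap.congr_fun (hD.commute_tw a b).eq x

theorem HasDegree.comp {d f : Γ} {D φ : L →ₗ[K] L} (hD : A.HasDegree d D)
    (hφ : A.HasDegree f φ) : A.HasDegree (f + d) (D ∘ₗ φ) :=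
  fun γ x hx => add_assoc γ f d ▸ hD _ _ (hφ γ x hx)

theorem HasDegree.sub {d : Γ} {D E : L →ₗ[K] L} (hD : A.HasDegree d D) (hE : A.HasDegree d E) :
    A.HasDegree d (D - E) :=
  fun γ x hx => Submodule.sub_mem _ (hD γ x hx) (hE γ x hx)

theorem HasDegree.smul {d : Γ} {D : L →ₗ[K] L} (c : K) (hD : A.HasDegree d D) :
    A.HasDegree d (c • D) :=
  fun γ x hx => Submodule.smul_mem _ c (hD γ x hx)

theorem CommutesTw.comp {D E : L →ₗ[K] L} (hD : A.CommutesTw D) (hE : A.CommutesTw E) :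
    A.CommutesTw (D ∘ₗ E) := by
  rw [commutesTw_iff] at *
  exact ⟨hD.1.mul_left hE.1, hD.2.mul_left hE.2⟩

theorem CommutesTw.sub {D E : L →ₗ[K] L} (hD : A.CommutesTw D) (hE : A.CommutesTw E) :
    A.CommutesTw (D - E) := by
  rw [commutesTw_iff] at *
  exact ⟨hD.1.sub_left hE.1, hD.2.sub_left hE.2⟩

theorem CommutesTw.smul {D : L →ₗ[K] L} (c : K) (hD : A.CommutesTw D) :
    A.CommutesTw (c • D) := by
  rw [commutesTw_iff] at *
  exact ⟨hD.1.smul_left c, hD.2.smul_left c⟩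

theorem update_tw_mem {dx : Fin (N + 1) → Γ} {x : Fin (N + 1) → L}
    (hx : ∀ j, x j ∈ A.grading (dx j)) (a b : ℕ) (i : Fin (N + 1)) {g : Γ} {D : L →ₗ[K] L}
    (hD : A.HasDegree g D) (j : Fin (N + 1)) :
    update (fun j => A.tw a b (x j)) i (D (x i)) j ∈ A.grading (update dx i (dx i + g) j) := by
  rcases eq_or_ne j i with rfl | hji
  · simpa using hD _ _ (hx j)
  · simpa [hji] using A.tw_mem a b (hx j)

theorem ε_Iio_update_swap (A : NBLCA K Γ N L) {ι : Type*} [LinearOrder ι]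
    [LocallyFiniteOrderBot ι] (d f : Γ) (dx : ι → Γ) {i j : ι} (hji : j ≠ i) :
    A.ε f (∑ m ∈ Iio i, dx m) * A.ε d (∑ m ∈ Iio j, update dx i (dx i + f) m)
      = A.ε d f * (A.ε d (∑ m ∈ Iio j, dx m) * A.ε f (∑ m ∈ Iio i, update dx j (dx j + d) m)) := by
  simp only [sum_Iio_update_add]
  rcases hji.lt_or_gt with hji | hij
  · rw [if_neg hji.not_gt, if_pos hji, add_zero, A.eps_add_right]
    linear_combination (-(A.ε d (∑ m ∈ Iio j, dx m) * A.ε f (∑ m ∈ Iio i, dx m))) * A.eps_skew d f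
  · rw [if_pos hij, if_neg hij.not_gt, add_zero, A.eps_add_right]
    ring

theorem IsDer.commutator_map_bracket {k r l s : ℕ} {d f : Γ} {D φ : L →ₗ[K] L}
    (hD : A.IsDer k r d D) (hφ : A.IsCent l s f φ) (i : Fin (N + 1)) (dx : Fin (N + 1) → Γ)
    (x : Fin (N + 1) → L) (hx : ∀ j, x j ∈ A.grading (dx j)) :
    (D ∘ₗ φ - A.ε d f • (φ ∘ₗ D)) (A.bracket x) = A.ε (d + f) (∑ m ∈ Iio i, dx m) •
      A.bracket (update (fun j => A.tw (k + l) (r + s) (x j)) i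
        ((D ∘ₗ φ - A.ε d f • (φ ∘ₗ D)) (x i))) := by
  obtain ⟨hDdeg, hDtw, hDbr⟩ := hD
  obtain ⟨hφdeg, hφtw, hφbr⟩ := hφ
  set y := update (fun m => A.tw l s (x m)) i (φ (x i))
  set z := fun j => update (fun m => A.tw k r (x m)) j (D (x j))
  have hDφ : D (φ (A.bracket x)) = ∑ j, (A.ε f (∑ m ∈ Iio i, dx m) *
      A.ε d (∑ m ∈ Iio j, update dx i (dx i + f) m)) •
        A.bracket (update (fun m => A.tw k r (y m)) j (D (y j))) := by
    rw [hφbr i dx x hx, map_smul, hDbr _ y (update_tw_mem hx l s i hφdeg), smul_sum]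
    simp only [smul_smul]
  have hφD : φ (D (A.bracket x)) = ∑ j, (A.ε d (∑ m ∈ Iio j, dx m) *
      A.ε f (∑ m ∈ Iio i, update dx j (dx j + d) m)) •
        A.bracket (update (fun m => A.tw l s (z j m)) i (φ (z j i))) := by
    rw [hDbr dx x hx, map_sum]
    refine sum_congr rfl fun j _ => ?_
    rw [map_smul, hφbr i _ (z j) (update_tw_mem hx k r j hDdeg), smul_smul]
  have hoff : ∀ j ≠ i, (A.ε f (∑ m ∈ Iio i, dx m) *
      A.ε d (∑ m ∈ Iio j, update dx i (dx i + f) m)) •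
        A.bracket (update (fun m => A.tw k r (y m)) j (D (y j))) =
      A.ε d f • (A.ε d (∑ m ∈ Iio j, dx m) * A.ε f (∑ m ∈ Iio i, update dx j (dx j + d) m)) •
        A.bracket (update (fun m => A.tw l s (z j m)) i (φ (z j i))) := by
    intro j hji
    have hy : D (y j) = A.tw l s (D (x j)) := by simp [y, hji, hDtw.map_tw]
    have hz : φ (z j i) = A.tw k r (φ (x i)) := by simp [z, hji.symm, hφtw.map_tw]
    rw [hy, hz, update_comp_update_comm _ _ ((A.commutesTw_tw k r).map_tw l s) x hji, smul_smul,
      A.ε_Iio_update_swap d f dx hji]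
  simp only [LinearMap.sub_apply, LinearMap.comp_apply, LinearMap.smul_apply]
  rw [hDφ, hφD, smul_sum, ← sum_sub_distrib,
    sum_eq_single i (fun j _ hji => sub_eq_zero.2 (hoff j hji)) (by simp)]
  simp only [y, z, update_self, update_comp_update_same, sum_Iio_update_add, lt_irrefl,
    if_false, add_zero, A.tw_tw, add_comm l k, add_comm s r, A.eps_add_left,
    MultilinearMap.map_update_sub, MultilinearMap.map_update_smul]
  module

end NBLCA

theorem commutator_Der_C_isCent_general {K : Type*} [Field K] {Γ : Type*} [AddCommGroup Γ]
    [DecidableEq Γ] {N : ℕ} {L : Type*} [AddCommGroup L] [Module K L]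
    (A : NBLCA K Γ N L)
    (k r l s : ℕ) (d f : Γ) (D φ : L →ₗ[K] L)
    (hD : A.IsDer k r d D) (hφ : A.IsCent l s f φ) :
    A.IsCent (k + l) (r + s) (d + f) (D ∘ₗ φ - A.ε d f • (φ ∘ₗ D)) :=
  ⟨(add_comm f d ▸ hD.1.comp hφ.1).sub ((hφ.1.comp hD.1).smul _),
    (hD.2.1.comp hφ.2.1).sub ((hφ.2.1.comp hD.2.1).smul _),
    fun i dx x hx => hD.commutator_map_bracket hφ i dx x hx⟩

/-- The `ε`-commutator of an `(αᵏ,βʳ)`-derivation of degree `d` and an element of the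
`(αˡ,βˢ)`-centroid of degree `f` lies in the `(α^{k+l},β^{r+s})`-centroid. -/
theorem commutator_Der_C_isCent {K : Type*} [Field K] {Γ : Type*} [AddCommGroup Γ]
    [DecidableEq Γ] {N : ℕ} {L : Type*} [AddCommGroup L] [Module K L]
    (A : NBLCA K Γ N L) (hmul : A.IsMultiplicative)
    (k r l s : ℕ) (d f : Γ) (D φ : L →ₗ[K] L)
    (hD : A.IsDer k r d D) (hφ : A.IsCent l s f φ) :
    A.IsCent (k + l) (r + s) (d + f) (D ∘ₗ φ - A.ε d f • (φ ∘ₗ D)) :=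
  commutator_Der_C_isCent_general A k r l s d f D φ hD hφ
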